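/- Let N ≥ 7 and F(σ) = |σ|^{4/(N−2)}σ. There is a constant C = C(N) such that for all reals a ≠ 0, b, c: |F(a+b+c) − F(a+b) − F(a+c) + F(a)| ≤ C |a|^{(6−N)/(2(N−2))} |b|^{(N+2)/(2(N−2))} |c|. -/

import Mathlib

/-!
Write `F(s) = |s|^p s` with `p = 4/(N-2) ∈ (0, 1]`. Since `F(a x) = |a|^p a F(x)`, it suffices to
bound the second difference at `a = 1` by `C |b|^((p+1)/2) |c|`. Its derivative `(p+1)|s|^p` is
`p`-Hölder everywhere and Lipschitz near `1`. For `|b| ≥ 1/10`, the mean value theorem in `c`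
gives the bound `(p+1)|b|^p |c|`, and `|b|^p ≲ |b|^((p+1)/2)` because `|b|` is bounded below.
For `|b| < 1/10`, the mean value theorem in `b` gives `≲ |b| |c| ≤ |b|^((p+1)/2) |c|`.
-/

open Real

/-- The energy-critical nonlinearity `F(σ) = |σ|^{4/(N-2)} σ`. -/
noncomputable def F (N : ℕ) (s : ℝ) : ℝ := |s| ^ ((4 : ℝ) / ((N : ℝ) - 2)) * s

open Set

noncomputable def oddRpow (p s : ℝ) : ℝ := |s| ^ p * s

def secondDiff (g : ℝ → ℝ) (x b c : ℝ) : ℝ := g (x + b + c) - g (x + b) - g (x + c) + g x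

lemma secondDiff_comm (g : ℝ → ℝ) (x b c : ℝ) : secondDiff g x b c = secondDiff g x c b := by
  simp only [secondDiff, add_right_comm x b c]
  ring

lemma abs_secondDiff_le_of_hasDerivAt {g g' : ℝ → ℝ} (hg : ∀ y, HasDerivAt g (g' y) y)
    {x b c K : ℝ} (hK : ∀ t ∈ uIcc 0 c, |g' (x + b + t) - g' (x + t)| ≤ K) :
    |secondDiff g x b c| ≤ K * |c| := by
  have hderiv : ∀ t ∈ uIcc 0 c, HasDerivWithinAt (fun t ↦ g (x + b + t) - g (x + t))
      (g' (x + b + t) - g' (x + t)) (uIcc 0 c) t := fun t _ ↦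
    (((hg _).comp_const_add _ _).sub ((hg _).comp_const_add _ _)).hasDerivWithinAt
  have := (convex_uIcc 0 c).norm_image_sub_le_of_norm_hasDerivWithin_le hderiv hK
    left_mem_uIcc right_mem_uIcc
  simp only [Real.norm_eq_abs, add_zero, sub_zero] at this
  rw [secondDiff]
  convert this using 2
  ring

lemma abs_abs_rpow_sub_abs_rpow_le {p : ℝ} (hp0 : 0 ≤ p) (hp1 : p ≤ 1) (u v : ℝ) :
    |(|u| ^ p - |v| ^ p)| ≤ |u - v| ^ p := by
  have key : ∀ u v : ℝ, |u| ^ p - |v| ^ p ≤ |u - v| ^ p := fun u v ↦ by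
    have htri : |u| ≤ |v| + |u - v| := by linarith [abs_sub_abs_le_abs_sub u v]
    linarith [(rpow_le_rpow (abs_nonneg u) htri hp0).trans
      (rpow_add_le_add_rpow (abs_nonneg v) (abs_nonneg _) hp0 hp1)]
  exact abs_sub_le_iff.2 ⟨key u v, abs_sub_comm u v ▸ key v u⟩

lemma abs_rpow_sub_rpow_le_of_le {p m x y : ℝ} (hp0 : 0 ≤ p) (hp1 : p ≤ 1) (hm : 0 < m)
    (hx : m ≤ x) (hy : m ≤ y) : |x ^ p - y ^ p| ≤ p * m ^ (p - 1) * |x - y| := by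
  have hderiv : ∀ z ∈ Ici m, HasDerivWithinAt (· ^ p) (p * z ^ (p - 1)) (Ici m) z := fun z hz ↦
    (hasDerivAt_rpow_const (Or.inl (hm.trans_le hz).ne')).hasDerivWithinAt
  have hbound : ∀ z ∈ Ici m, ‖p * z ^ (p - 1)‖ ≤ p * m ^ (p - 1) := fun z hz ↦ by
    rw [Real.norm_eq_abs, abs_of_nonneg (by have := hm.trans_le hz; positivity)]
    exact mul_le_mul_of_nonneg_left (rpow_le_rpow_of_nonpos hm hz (by linarith)) hp0
  simpa only [Real.norm_eq_abs] using
    (convex_Ici m).norm_image_sub_le_of_norm_hasDerivWithin_le hderiv hbound hy hx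

lemma hasDerivAt_oddRpow {p : ℝ} (hp : 0 < p) (x : ℝ) :
    HasDerivAt (oddRpow p) ((p + 1) * |x| ^ p) x := by
  refine hasDerivAt_of_hasDerivAt_of_ne' (f := oddRpow p) (g := fun y ↦ (p + 1) * |y| ^ p)
    (x := 0) (fun y hy ↦ ?_) ?_ ?_ x
  · have hy' : |y| ≠ 0 := abs_ne_zero.2 hy
    refine (((hasDerivAt_abs hy).rpow_const (p := p) (Or.inl hy')).mul
      (hasDerivAt_id' y)).congr_deriv ?_
    have hpow : |y| ^ (p - 1) * |y| = |y| ^ p := by rw [← rpow_add_one hy', sub_add_cancel]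
    linear_combination (p * |y| ^ (p - 1)) * sign_mul_self y + p * hpow
  · exact ((continuous_abs.rpow_const fun _ ↦ Or.inr hp.le).mul continuous_id).continuousAt
  · exact (continuous_const.mul (continuous_abs.rpow_const fun _ ↦ Or.inr hp.le)).continuousAt

lemma abs_abs_rpow_add_sub_abs_rpow_le_of_abs_sub_one_le {p x : ℝ} (hp0 : 0 ≤ p) (hp1 : p ≤ 1)
    (hx : |x - 1| ≤ 1 / 10) (c : ℝ) : |(|x + c| ^ p - |x| ^ p)| ≤ 3 * |c| := by
  rw [abs_le] at hx
  rcases le_or_gt |c| (1 / 2) with hc | hc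
  · rw [abs_le] at hc
    have hbase : (2 / 5 : ℝ) ^ (p - 1) ≤ 5 / 2 := calc
      (2 / 5 : ℝ) ^ (p - 1) ≤ (2 / 5) ^ (-1 : ℝ) :=
        rpow_le_rpow_of_exponent_ge (by norm_num) (by norm_num) (by linarith)
      _ = 5 / 2 := by norm_num [rpow_neg_one]
    have := abs_rpow_sub_rpow_le_of_le hp0 hp1 (by norm_num : (0 : ℝ) < 2 / 5)
      (by linarith : 2 / 5 ≤ x + c) (by linarith : 2 / 5 ≤ x)
    rw [abs_of_pos (by linarith : 0 < x + c), abs_of_pos (by linarith : 0 < x)]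
    calc |(x + c) ^ p - x ^ p| ≤ p * (2 / 5) ^ (p - 1) * |x + c - x| := this
      _ ≤ 1 * (5 / 2) * |c| := by
        rw [add_sub_cancel_left]
        gcongr
      _ ≤ 3 * |c| := by linarith [abs_nonneg c]
  · have hcp : |c| ^ p ≤ 2 * |c| := by
      rcases le_or_gt 1 |c| with h1 | h1
      · calc |c| ^ p ≤ |c| ^ (1 : ℝ) := rpow_le_rpow_of_exponent_le h1 hp1
          _ ≤ 2 * |c| := by rw [rpow_one]; linarith
      · linarith [rpow_le_one (abs_nonneg c) h1.le hp0]
    calc |(|x + c| ^ p - |x| ^ p)| ≤ |x + c - x| ^ p := abs_abs_rpow_sub_abs_rpow_le hp0 hp1 _ _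
      _ ≤ 3 * |c| := by rw [add_sub_cancel_left]; linarith

lemma abs_secondDiff_oddRpow_one_le {p : ℝ} (hp0 : 0 < p) (hp1 : p ≤ 1) (b c : ℝ) :
    |secondDiff (oddRpow p) 1 b c| ≤ 20 * |b| ^ ((p + 1) / 2) * |c| := by
  have hderiv_sub : ∀ u v : ℝ, |(p + 1) * |u| ^ p - (p + 1) * |v| ^ p|
      = (p + 1) * |(|u| ^ p - |v| ^ p)| := fun u v ↦ by
    rw [← mul_sub, abs_mul, abs_of_pos (by linarith)]
  have hq0 : 0 ≤ (p + 1) / 2 := by linarith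
  rcases le_or_gt (1 / 10) |b| with hb | hb
  · -- the derivative is `p`-Hölder, so the difference quotient in `c` is `O(|b|^p)`
    have hK : ∀ t ∈ uIcc 0 c, |(p + 1) * |1 + b + t| ^ p - (p + 1) * |1 + t| ^ p|
        ≤ (p + 1) * |b| ^ p := fun t _ ↦ by
      rw [hderiv_sub]
      gcongr
      simpa using abs_abs_rpow_sub_abs_rpow_le hp0.le hp1 (1 + b + t) (1 + t)
    have hsmall : |b| ^ ((p - 1) / 2) ≤ 10 := calc
      |b| ^ ((p - 1) / 2) ≤ (1 / 10) ^ ((p - 1) / 2) :=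
        rpow_le_rpow_of_nonpos (by norm_num) hb (by linarith)
      _ ≤ (1 / 10) ^ (-1 : ℝ) :=
        rpow_le_rpow_of_exponent_ge (by norm_num) (by norm_num) (by linarith)
      _ = 10 := by norm_num [rpow_neg_one]
    calc |secondDiff (oddRpow p) 1 b c| ≤ (p + 1) * |b| ^ p * |c| :=
          abs_secondDiff_le_of_hasDerivAt (hasDerivAt_oddRpow hp0) hK
      _ = (p + 1) * |b| ^ ((p - 1) / 2) * |b| ^ ((p + 1) / 2) * |c| := by
          rw [mul_assoc (p + 1) _ (|b| ^ _),
            ← rpow_add ((by norm_num : (0 : ℝ) < 1 / 10).trans_le hb)]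
          ring_nf
      _ ≤ 2 * 10 * |b| ^ ((p + 1) / 2) * |c| := by gcongr; linarith
      _ = 20 * |b| ^ ((p + 1) / 2) * |c| := by norm_num
  · -- near `1` the derivative is Lipschitz, so the difference quotient in `b` is `O(|c|)`
    have hK : ∀ t ∈ uIcc 0 b, |(p + 1) * |1 + c + t| ^ p - (p + 1) * |1 + t| ^ p| ≤ 6 * |c| :=
      fun t ht ↦ by
        have htb : |t| ≤ |b| := by simpa using abs_sub_left_of_mem_uIcc ht
        have ht : |1 + t - 1| ≤ 1 / 10 := by simpa using htb.trans hb.le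
        rw [hderiv_sub, add_right_comm]
        calc (p + 1) * |(|1 + t + c| ^ p - |1 + t| ^ p)| ≤ 2 * (3 * |c|) := by
              gcongr
              · linarith
              · exact abs_abs_rpow_add_sub_abs_rpow_le_of_abs_sub_one_le hp0.le hp1 ht c
          _ = 6 * |c| := by ring
    have hb_le : |b| ≤ |b| ^ ((p + 1) / 2) := by
      simpa using rpow_le_rpow_of_exponent_ge' (abs_nonneg b) (by linarith) hq0
        (by linarith : (p + 1) / 2 ≤ 1)
    calc |secondDiff (oddRpow p) 1 b c| = |secondDiff (oddRpow p) 1 c b| := by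
          rw [secondDiff_comm]
      _ ≤ 6 * |c| * |b| := abs_secondDiff_le_of_hasDerivAt (hasDerivAt_oddRpow hp0) hK
      _ ≤ 20 * |b| ^ ((p + 1) / 2) * |c| := by
          nlinarith [abs_nonneg c, mul_le_mul_of_nonneg_left hb_le (abs_nonneg c),
            mul_nonneg (rpow_nonneg (abs_nonneg b) ((p + 1) / 2)) (abs_nonneg c)]

lemma oddRpow_mul (p a x : ℝ) : oddRpow p (a * x) = |a| ^ p * a * oddRpow p x := by
  simp only [oddRpow, abs_mul, mul_rpow (abs_nonneg a) (abs_nonneg x)]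
  ring

lemma secondDiff_oddRpow_eq {p a : ℝ} (ha : a ≠ 0) (b c : ℝ) :
    secondDiff (oddRpow p) a b c = |a| ^ p * a * secondDiff (oddRpow p) 1 (b / a) (c / a) := by
  simp only [secondDiff, mul_add, mul_sub, ← oddRpow_mul]
  congr 3 <;> field_simp

theorem abs_secondDiff_oddRpow_le {p a : ℝ} (hp0 : 0 < p) (hp1 : p ≤ 1) (ha : a ≠ 0) (b c : ℝ) :
    |secondDiff (oddRpow p) a b c| ≤ 20 * |a| ^ ((p - 1) / 2) * |b| ^ ((p + 1) / 2) * |c| := by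
  have ha' : 0 < |a| := abs_pos.2 ha
  have hsplit : |a| ^ p = |a| ^ ((p - 1) / 2) * |a| ^ ((p + 1) / 2) := by
    rw [← rpow_add ha']
    ring_nf
  rw [secondDiff_oddRpow_eq ha, abs_mul, abs_mul, abs_of_nonneg (rpow_nonneg ha'.le p)]
  calc |a| ^ p * |a| * |secondDiff (oddRpow p) 1 (b / a) (c / a)|
      ≤ |a| ^ p * |a| * (20 * |b / a| ^ ((p + 1) / 2) * |c / a|) := by
        gcongr
        exact abs_secondDiff_oddRpow_one_le hp0 hp1 _ _
    _ = 20 * |a| ^ ((p - 1) / 2) * |b| ^ ((p + 1) / 2) * |c| := by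
        rw [abs_div, abs_div, div_rpow (abs_nonneg b) ha'.le, hsplit]
        field_simp

theorem pointwise_second_difference_F (N : ℕ) (hN : 7 ≤ N) :
    ∃ C > 0, ∀ a b c : ℝ, a ≠ 0 →
      |F N (a + b + c) - F N (a + b) - F N (a + c) + F N a|
        ≤ C * |a| ^ (((6 : ℝ) - (N : ℝ)) / (2 * ((N : ℝ) - 2)))
            * |b| ^ (((N : ℝ) + 2) / (2 * ((N : ℝ) - 2))) * |c| := by
  have hN' : (7 : ℝ) ≤ N := by exact_mod_cast hN
  have hd : (0 : ℝ) < N - 2 := by linarith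
  set p : ℝ := 4 / ((N : ℝ) - 2) with hp
  have hp0 : 0 < p := by positivity
  have hp1 : p ≤ 1 := by rw [hp, div_le_one hd]; linarith
  have hexp_a : ((6 : ℝ) - N) / (2 * (N - 2)) = (p - 1) / 2 := by rw [hp]; field_simp; ring
  have hexp_b : ((N : ℝ) + 2) / (2 * (N - 2)) = (p + 1) / 2 := by rw [hp]; field_simp; ring
  refine ⟨20, by norm_num, fun a b c ha ↦ ?_⟩
  rw [hexp_a, hexp_b]
  exact abs_secondDiff_oddRpow_le hp0 hp1 ha b c
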